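/- arXiv:1803.05866 — 2 statements merged into one kernel-verified Lean document; each statement's English description precedes it below -/
import Mathlib

section
/- For any three rooted tree shapes T1, T2, T3 with the same number of leaves, |V(T2)| + μ(T1, T3) ≥ μ(T1, T2) + μ(T2, T3), where μ denotes the maximum cardinality of a consistent cluster matching between two tree shapes. -/
/-- A rooted tree shape on a finite vertex type, given by a parent function.
The root is its own parent, and every vertex reaches the root by iterating
the parent function (this forbids cycles away from the root). -/
structure RTree where
  V : Type
  [fin : Fintype V]
  [deq : DecidableEq V]
  root : V
  parent : V → V
  parent_root : parent root = root
  reaches_root : ∀ v : V, ∃ n : ℕ, parent^[n] v = root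

attribute [instance] RTree.fin RTree.deq

namespace RTree

/-- `u` is a descendant of `v` (every vertex is a descendant of itself). -/
def Desc (T : RTree) (u v : T.V) : Prop := ∃ n : ℕ, T.parent^[n] u = v

/-- A leaf is a vertex with no children. -/
def IsLeaf (T : RTree) (v : T.V) : Prop := ∀ u : T.V, u ≠ v → T.parent u ≠ v

def leafSet (T : RTree) : Set T.V := {v | T.IsLeaf v}

/-- The size (number of leaves) of the tree. -/
noncomputable def nLeaves (T : RTree) : ℕ := T.leafSet.ncard

/-- The size of a vertex: the number of leaves of the subtree rooted at it. -/
noncomputable def sz (T : RTree) (v : T.V) : ℕ := {l | T.IsLeaf l ∧ T.Desc l v}.ncard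

/-- Two vertices are incomparable if neither is an ancestor of the other. -/
def Incomp (T : RTree) (u v : T.V) : Prop := ¬ T.Desc u v ∧ ¬ T.Desc v u

def children (T : RTree) (v : T.V) : Set T.V := {u | T.parent u = v ∧ u ≠ v}

/-- The number of vertices of the tree. -/
noncomputable def nVerts (T : RTree) : ℕ := Nat.card T.V

/-- A binary tree shape: every internal vertex has exactly two children. -/
def IsBinary (T : RTree) : Prop := ∀ v : T.V, ¬ T.IsLeaf v → (T.children v).ncard = 2

end RTree

/-- A consistent cluster matching between two tree shapes: a set of pairs of
vertices in which each vertex occurs at most once, matched vertices root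
subtrees with equally many leaves (M1), and incomparability is preserved in
both directions (M2). -/
def ConsistentMatching (T1 T2 : RTree) (M : Set (T1.V × T2.V)) : Prop :=
  (∀ p ∈ M, ∀ q ∈ M, (p.1 = q.1 ∨ p.2 = q.2) → p = q) ∧
  (∀ p ∈ M, T1.sz p.1 = T2.sz p.2) ∧
  (∀ p ∈ M, ∀ q ∈ M, (T1.Incomp p.1 q.1 ↔ T2.Incomp p.2 q.2))

/-- The maximum cardinality of a consistent cluster matching. -/
noncomputable def mu (T1 T2 : RTree) : ℕ :=
  sSup {n | ∃ M : Set (T1.V × T2.V), ConsistentMatching T1 T2 M ∧ M.ncard = n}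


/-!
Compose optimal matchings `M₁₂` and `M₂₃` through `T2`. Equal sizes and the incomparability
condition are both transitive, so the composite is a consistent matching between `T1` and `T3`,
and it has one pair for each vertex of `T2` matched on both sides. By inclusion–exclusion there
are at least `|M₁₂| + |M₂₃| - |V(T2)|` such vertices.
-/

open SetRel

namespace SetRel

variable {α β γ : Type*}

def IsPartialBijection (R : SetRel α β) : Prop :=
  ∀ p ∈ R, ∀ q ∈ R, (p.1 = q.1 ∨ p.2 = q.2) → p = q

namespace IsPartialBijection

variable {R : SetRel α β} {S : SetRel β γ}

theorem comp (hR : R.IsPartialBijection) (hS : S.IsPartialBijection) :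
    (R ○ S).IsPartialBijection := by
  rintro ⟨a, c⟩ ⟨b, hab, hbc⟩ ⟨a', c'⟩ ⟨b', hab', hbc'⟩ h
  rcases h with rfl | rfl
  · obtain rfl : b = b' := congrArg Prod.snd (hR _ hab _ hab' (.inl rfl))
    obtain rfl : c = c' := congrArg Prod.snd (hS _ hbc _ hbc' (.inl rfl))
    rfl
  · obtain rfl : b = b' := congrArg Prod.fst (hS _ hbc _ hbc' (.inr rfl))
    obtain rfl : a = a' := congrArg Prod.fst (hR _ hab _ hab' (.inr rfl))
    rfl

theorem ncard_cod (hR : R.IsPartialBijection) : R.cod.ncard = R.ncard := by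
  have hcod : R.cod = Prod.snd '' R := by ext; simp
  rw [hcod, Set.InjOn.ncard_image fun p hp q hq h => hR p hp q hq (.inr h)]

theorem ncard_dom (hS : S.IsPartialBijection) : S.dom.ncard = S.ncard := by
  have hdom : S.dom = Prod.fst '' S := by ext; simp
  rw [hdom, Set.InjOn.ncard_image fun p hp q hq h => hS p hp q hq (.inl h)]

/-- Both `R ○ S` and `R.cod ∩ S.dom` are injective images of the set of chains `a ~ b ~ c`. -/
theorem ncard_comp (hR : R.IsPartialBijection) (hS : S.IsPartialBijection) :
    (R ○ S).ncard = (R.cod ∩ S.dom).ncard := by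
  set chains : Set (α × β × γ) := {t | (t.1, t.2.1) ∈ R ∧ (t.2.1, t.2.2) ∈ S}
  have hends : (fun t : α × β × γ => (t.1, t.2.2)) '' chains = R ○ S := by
    ext ⟨a, c⟩; simp [chains]
  have hmiddle : (fun t : α × β × γ => t.2.1) '' chains = R.cod ∩ S.dom := by
    ext b; simp [chains]
  have hends_inj : Set.InjOn (fun t : α × β × γ => (t.1, t.2.2)) chains := by
    rintro ⟨a, b, c⟩ ⟨hab, hbc⟩ ⟨a', b', c'⟩ ⟨hab', hbc'⟩ h
    obtain ⟨rfl, rfl⟩ := Prod.mk.inj h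
    obtain rfl : b = b' := congrArg Prod.snd (hR _ hab _ hab' (.inl rfl))
    rfl
  have hmiddle_inj : Set.InjOn (fun t : α × β × γ => t.2.1) chains := by
    rintro ⟨a, b, c⟩ ⟨hab, hbc⟩ ⟨a', b', c'⟩ ⟨hab', hbc'⟩ (rfl : b = b')
    obtain rfl : a = a' := congrArg Prod.fst (hR _ hab _ hab' (.inr rfl))
    obtain rfl : c = c' := congrArg Prod.snd (hS _ hbc _ hbc' (.inl rfl))
    rfl
  rw [← hends, ← hmiddle, hends_inj.ncard_image, hmiddle_inj.ncard_image]

theorem ncard_add_ncard_le [Finite β] (hR : R.IsPartialBijection) (hS : S.IsPartialBijection) :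
    R.ncard + S.ncard ≤ Nat.card β + (R ○ S).ncard := by
  have hunion : (R.cod ∪ S.dom).ncard ≤ Nat.card β := by
    rw [← Set.ncard_univ]
    exact Set.ncard_le_ncard (Set.subset_univ _)
  calc R.ncard + S.ncard = R.cod.ncard + S.dom.ncard := by rw [hR.ncard_cod, hS.ncard_dom]
    _ = (R.cod ∪ S.dom).ncard + (R.cod ∩ S.dom).ncard :=
      (Set.ncard_union_add_ncard_inter _ _ (Set.toFinite _) (Set.toFinite _)).symm
    _ ≤ Nat.card β + (R ○ S).ncard := by rw [hR.ncard_comp hS]; omega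

end IsPartialBijection

end SetRel

namespace ConsistentMatching

variable {T1 T2 T3 : RTree}

variable (T1 T2) in
theorem empty : ConsistentMatching T1 T2 ∅ := by
  refine ⟨?_, ?_, ?_⟩ <;> simp

theorem isPartialBijection {M : SetRel T1.V T2.V} (hM : ConsistentMatching T1 T2 M) :
    M.IsPartialBijection :=
  hM.1

theorem comp {M : SetRel T1.V T2.V} {N : SetRel T2.V T3.V} (hM : ConsistentMatching T1 T2 M)
    (hN : ConsistentMatching T2 T3 N) : ConsistentMatching T1 T3 (M ○ N) := by
  refine ⟨hM.isPartialBijection.comp hN.isPartialBijection, ?_, ?_⟩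
  · rintro ⟨a, c⟩ ⟨b, hab, hbc⟩
    exact (hM.2.1 _ hab).trans (hN.2.1 _ hbc)
  · rintro ⟨a, c⟩ ⟨b, hab, hbc⟩ ⟨a', c'⟩ ⟨b', hab', hbc'⟩
    exact (hM.2.2 _ hab _ hab').trans (hN.2.2 _ hbc _ hbc')

variable (T1 T2) in
theorem bddAbove_ncard :
    BddAbove {n | ∃ M : Set (T1.V × T2.V), ConsistentMatching T1 T2 M ∧ M.ncard = n} := by
  refine ⟨Nat.card (T1.V × T2.V), ?_⟩
  rintro n ⟨M, -, rfl⟩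
  rw [← Set.ncard_univ]
  exact Set.ncard_le_ncard (Set.subset_univ M)

theorem ncard_le_mu {M : Set (T1.V × T2.V)} (hM : ConsistentMatching T1 T2 M) :
    M.ncard ≤ mu T1 T2 :=
  le_csSup (bddAbove_ncard T1 T2) ⟨M, hM, rfl⟩

end ConsistentMatching

theorem exists_consistentMatching_ncard_eq_mu (T1 T2 : RTree) :
    ∃ M : Set (T1.V × T2.V), ConsistentMatching T1 T2 M ∧ M.ncard = mu T1 T2 :=
  show mu T1 T2 ∈ {n | ∃ M, ConsistentMatching T1 T2 M ∧ M.ncard = n} from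
  Nat.sSup_mem ⟨0, ∅, .empty T1 T2, Set.ncard_empty _⟩ (ConsistentMatching.bddAbove_ncard T1 T2)

theorem mu_triangle_general (T1 T2 T3 : RTree) :
    mu T1 T2 + mu T2 T3 ≤ T2.nVerts + mu T1 T3 := by
  obtain ⟨M, hM, hMcard⟩ := exists_consistentMatching_ncard_eq_mu T1 T2
  obtain ⟨N, hN, hNcard⟩ := exists_consistentMatching_ncard_eq_mu T2 T3
  calc mu T1 T2 + mu T2 T3 = M.ncard + N.ncard := by rw [hMcard, hNcard]
    _ ≤ T2.nVerts + (M ○ N).ncard :=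
      hM.isPartialBijection.ncard_add_ncard_le hN.isPartialBijection
    _ ≤ T2.nVerts + mu T1 T3 := Nat.add_le_add_left (hM.comp hN).ncard_le_mu _

/-- For three tree shapes with the same number of leaves,
`|V(T2)| + μ(T1,T3) ≥ μ(T1,T2) + μ(T2,T3)`. -/
theorem mu_triangle (T1 T2 T3 : RTree)
    (h12 : T1.nLeaves = T2.nLeaves) (h23 : T2.nLeaves = T3.nLeaves) :
    mu T1 T2 + mu T2 T3 ≤ T2.nVerts + mu T1 T3 :=
  mu_triangle_general T1 T2 T3
end

section
/- Let T1 and T2 be rooted tree shapes with the same number of leaves, and let u be an internal child of the root of T1. Let T1 − u be the tree obtained by contracting the edge from the root to u (deleting u and attaching its children to the root). Then d*_RF(T1, T2) ≤ d*_RF(T1 − u, T2) + 1. -/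
/-- The set of clusters of a tree under a leaf labelling `φ`. -/
def clusterSet (T : RTree) {X : Type} (φ : T.V → X) : Set (Set X) :=
  {C | ∃ u : T.V, C = φ '' {l | T.IsLeaf l ∧ T.Desc l u}}

/-- The Robinson–Foulds distance of two labelled trees: the cardinality of the
symmetric difference of their cluster sets. -/
noncomputable def dRF (T1 T2 : RTree) {X : Type} (φ1 : T1.V → X) (φ2 : T2.V → X) : ℕ :=
  ((clusterSet T1 φ1 \ clusterSet T2 φ2) ∪ (clusterSet T2 φ2 \ clusterSet T1 φ1)).ncard

/-- The extension of the Robinson–Foulds distance to tree shapes: the minimum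
over all pairs of bijective leaf labellings by a common label set. -/
noncomputable def dRFstar (T1 T2 : RTree) : ℕ :=
  sInf {d | ∃ φ1 : T1.V → Fin T1.nLeaves, ∃ φ2 : T2.V → Fin T1.nLeaves,
    Set.BijOn φ1 T1.leafSet Set.univ ∧ Set.BijOn φ2 T2.leafSet Set.univ ∧
    d = dRF T1 T2 φ1 φ2}

/-- Contracting the edge from the root to its child `u`: delete `u` and
attach its children directly to the root. -/
def RTree.contract (T : RTree) (u : T.V) (hu : u ≠ T.root) : RTree where
  V := {v : T.V // v ≠ u}
  fin := inferInstance
  deq := inferInstance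
  root := ⟨T.root, fun h => hu h.symm⟩
  parent := fun v =>
    if h : T.parent v.val = u then ⟨T.root, fun h' => hu h'.symm⟩
    else ⟨T.parent v.val, h⟩
  parent_root := by
    have h : T.parent T.root ≠ u := by
      rw [T.parent_root]; exact fun h => hu h.symm
    simp [h, T.parent_root]
  reaches_root := by
    intro v
    obtain ⟨n, hn⟩ := T.reaches_root v.val
    induction n generalizing v with
    | zero => exact ⟨0, Subtype.ext hn⟩
    | succ m ih =>
        by_cases hpu : T.parent v.val = u
        · exact ⟨1, by simp [hpu]⟩
        · have hn' : T.parent^[m] (T.parent v.val) = T.root := by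
            rw [← Function.iterate_succ_apply]; exact hn
          obtain ⟨m', hm'⟩ := ih ⟨T.parent v.val, hpu⟩ hn'
          refine ⟨m' + 1, ?_⟩
          rw [Function.iterate_succ_apply]
          simpa [hpu] using hm'

/-!
Contracting the root edge to `u` changes neither the leaves nor the descendant relation among
the surviving vertices, so under the restriction of a leaf labelling of `T1` the clusters of
`T1 - u` are exactly those of `T1` other than the cluster of `u`. Extending an optimal pair of
labellings of `(T1 - u, T2)` to `T1` therefore adds at most one cluster to the symmetric
difference.
-/

open Set
open scoped symmDiff

namespace RTree

variable (T : RTree)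

/-- Its image under a leaf labelling is the cluster of `v`. -/
def leavesBelow (v : T.V) : Set T.V := {l | T.IsLeaf l ∧ T.Desc l v}

lemma Desc.trans {T : RTree} {a b c : T.V} (hab : T.Desc a b) (hbc : T.Desc b c) :
    T.Desc a c := by
  obtain ⟨m, rfl⟩ := hab
  obtain ⟨n, rfl⟩ := hbc
  exact ⟨n + m, Function.iterate_add_apply _ _ _ _⟩

lemma iterate_parent_root (n : ℕ) : T.parent^[n] T.root = T.root :=
  Function.iterate_fixed T.parent_root n

/-- A vertex of maximal depth is a leaf: a child would be one step deeper. -/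
lemma exists_isLeaf : ∃ v, T.IsLeaf v := by
  have : Nonempty T.V := ⟨T.root⟩
  let depth : T.V → ℕ := fun v => Nat.find (T.reaches_root v)
  have hdepth (v : T.V) : T.parent^[depth v] v = T.root := Nat.find_spec (T.reaches_root v)
  obtain ⟨v, hv⟩ := Finite.exists_max depth
  refine ⟨v, fun w hwv hpw => ?_⟩
  rcases hw : depth w with _ | k
  · have hroot : w = T.root := by simpa [hw] using hdepth w
    exact hwv (by rw [← hpw, hroot, T.parent_root])
  · have hvk : depth v ≤ k := Nat.find_le (by simpa [hw, hpw] using hdepth w)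
    have := hv w
    omega

lemma exists_bijOn_leafSet (n : ℕ) (hn : T.nLeaves = n) :
    ∃ φ : T.V → Fin n, BijOn φ T.leafSet univ := by
  obtain ⟨l, hl⟩ := T.exists_isLeaf
  have : Nonempty (Fin n) :=
    ⟨⟨0, hn ▸ (ncard_pos (toFinite T.leafSet)).2 ⟨l, hl⟩⟩⟩
  refine (toFinite T.leafSet).exists_bijOn_of_encard_eq ?_
  rw [← (toFinite T.leafSet).cast_ncard_eq, encard_univ, ENat.card_eq_coe_fintype_card,
    Fintype.card_fin]
  exact congrArg _ hn

end RTree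

lemma clusterSet_eq_range (T : RTree) {X : Type} (φ : T.V → X) :
    clusterSet T φ = range fun v => φ '' T.leavesBelow v := by
  ext C
  simp [clusterSet, RTree.leavesBelow, eq_comm]

lemma clusterSet_finite (T : RTree) {X : Type} (φ : T.V → X) : (clusterSet T φ).Finite := by
  rw [clusterSet_eq_range]
  exact finite_range _

lemma clusterSet_comp (T : RTree) {X Y : Type} (f : X → Y) (φ : T.V → X) :
    clusterSet T (f ∘ φ) = image f '' clusterSet T φ := by
  simp only [clusterSet_eq_range, ← range_comp, Function.comp_def, image_image]

lemma dRF_eq_ncard_symmDiff (T1 T2 : RTree) {X : Type} (φ1 : T1.V → X) (φ2 : T2.V → X) :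
    dRF T1 T2 φ1 φ2 = (clusterSet T1 φ1 ∆ clusterSet T2 φ2).ncard :=
  rfl

lemma dRF_comp_of_injective (T1 T2 : RTree) {X Y : Type} {f : X → Y}
    (hf : Function.Injective f) (φ1 : T1.V → X) (φ2 : T2.V → X) :
    dRF T1 T2 (f ∘ φ1) (f ∘ φ2) = dRF T1 T2 φ1 φ2 := by
  rw [dRF_eq_ncard_symmDiff, dRF_eq_ncard_symmDiff, clusterSet_comp T1 f, clusterSet_comp T2 f,
    ← image_symmDiff (image_injective.2 hf), ncard_image_of_injective _ (image_injective.2 hf)]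

lemma dRFstar_le_dRF (T1 T2 : RTree) {X : Type} (e : X ≃ Fin T1.nLeaves)
    {φ1 : T1.V → X} {φ2 : T2.V → X} (h1 : BijOn φ1 T1.leafSet univ)
    (h2 : BijOn φ2 T2.leafSet univ) :
    dRFstar T1 T2 ≤ dRF T1 T2 φ1 φ2 :=
  Nat.sInf_le ⟨e ∘ φ1, e ∘ φ2, e.bijective.bijOn_univ.comp h1, e.bijective.bijOn_univ.comp h2,
    (dRF_comp_of_injective T1 T2 e.injective φ1 φ2).symm⟩

lemma exists_dRFstar_eq_dRF (T1 T2 : RTree) (hn : T2.nLeaves = T1.nLeaves) :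
    ∃ φ1 : T1.V → Fin T1.nLeaves, ∃ φ2 : T2.V → Fin T1.nLeaves,
      BijOn φ1 T1.leafSet univ ∧ BijOn φ2 T2.leafSet univ ∧
      dRFstar T1 T2 = dRF T1 T2 φ1 φ2 := by
  obtain ⟨φ1, h1⟩ := T1.exists_bijOn_leafSet _ rfl
  obtain ⟨φ2, h2⟩ := T2.exists_bijOn_leafSet _ hn
  exact (Nat.sInf_mem ⟨_, φ1, φ2, h1, h2, rfl⟩ : dRFstar T1 T2 ∈ _)

lemma ncard_symmDiff_insert_le {α : Type*} {A B : Set α} (hA : A.Finite) (hB : B.Finite)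
    (a : α) : (insert a A ∆ B).ncard ≤ (A ∆ B).ncard + 1 := by
  have hsub : insert a A ∆ B ⊆ insert a (A ∆ B) := by
    intro x hx
    simp only [mem_symmDiff, mem_insert_iff] at hx ⊢
    tauto
  calc (insert a A ∆ B).ncard ≤ (insert a (A ∆ B)).ncard :=
        ncard_le_ncard hsub (((hA.union hB).subset symmDiff_subset_union).insert a)
    _ ≤ (A ∆ B).ncard + 1 := ncard_insert_le _ _

namespace RTree

section Contract

variable {T : RTree} {u : T.V} (hne : u ≠ T.root)

lemma contract_parent_val (v : (T.contract u hne).V) :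
    ((T.contract u hne).parent v).val =
      if T.parent v.val = u then T.root else T.parent v.val := by
  by_cases h : T.parent v.val = u <;> simp [RTree.contract, h]

variable (hpu : T.parent u = T.root)
include hpu

lemma desc_contract_parent (v : (T.contract u hne).V) :
    T.Desc v.val ((T.contract u hne).parent v).val := by
  rw [contract_parent_val]
  split_ifs with h
  · exact ⟨2, by simp [h, hpu]⟩
  · exact ⟨1, rfl⟩

omit hne in
lemma eq_or_eq_root_of_desc {w : T.V} (h : T.Desc u w) : w = u ∨ w = T.root := by
  obtain ⟨_ | n, rfl⟩ := h
  · exact Or.inl rfl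
  · exact Or.inr (by rw [Function.iterate_succ_apply, hpu, T.iterate_parent_root])

lemma contract_desc_iff (v w : (T.contract u hne).V) :
    (T.contract u hne).Desc v w ↔ T.Desc v.val w.val := by
  constructor
  · rintro ⟨n, rfl⟩
    induction n generalizing v with
    | zero => exact ⟨0, rfl⟩
    | succ n ih => exact (desc_contract_parent hne hpu v).trans (ih _)
  · rintro ⟨n, hn⟩
    induction n generalizing v with
    | zero => exact ⟨0, Subtype.ext hn⟩
    | succ n ih =>
      rw [Function.iterate_succ_apply] at hn
      by_cases h : T.parent v.val = u
      · have hw : w.val = T.root :=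
          (eq_or_eq_root_of_desc hpu ⟨n, by rwa [h] at hn⟩).resolve_left w.prop
        exact ⟨1, Subtype.ext (by rw [Function.iterate_one, contract_parent_val, if_pos h, hw])⟩
      · obtain ⟨k, hk⟩ := ih ((T.contract u hne).parent v) (by rwa [contract_parent_val, if_neg h])
        exact ⟨k + 1, hk⟩

lemma contract_isLeaf_iff (hint : ¬ T.IsLeaf u) (v : (T.contract u hne).V) :
    (T.contract u hne).IsLeaf v ↔ T.IsLeaf v.val := by
  constructor
  · intro hl w hwv hpw
    -- a child `w` of `v` in `T` survives in the contraction, unless `w = u`: then take a child of `u`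
    obtain ⟨w', hw'v, hpw'⟩ :
        ∃ w' : (T.contract u hne).V, w' ≠ v ∧ (T.contract u hne).parent w' = v := by
      by_cases hwu : w = u
      · have hvr : v.val = T.root := by rw [← hpw, hwu, hpu]
        obtain ⟨c, hcu, hpc⟩ : ∃ c, c ≠ u ∧ T.parent c = u := by
          simpa [RTree.IsLeaf] using hint
        have hcr : c ≠ T.root := by
          rintro rfl
          exact hne (by rw [← hpc, T.parent_root])
        refine ⟨⟨c, hcu⟩, fun h => hcr (by rw [← hvr, ← h]),
          Subtype.ext ((contract_parent_val hne _).trans ?_)⟩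
        rw [if_pos hpc, hvr]
      · have hpwu : T.parent w ≠ u := by rw [hpw]; exact v.prop
        refine ⟨⟨w, hwu⟩, fun h => hwv (congrArg Subtype.val h),
          Subtype.ext ((contract_parent_val hne _).trans ?_)⟩
        rw [if_neg hpwu, hpw]
    exact hl w' hw'v hpw'
  · intro hl w hwv hpw
    have hval := congrArg Subtype.val hpw
    rw [contract_parent_val] at hval
    split_ifs at hval with h
    · exact hl u (fun h' => hne (h'.trans hval.symm)) (hpu.trans hval)
    · exact hl w.val (fun h' => hwv (Subtype.ext h')) hval

variable (hint : ¬ T.IsLeaf u)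
include hint

omit hne hpu in
lemma leafSet_subset_range_val : T.leafSet ⊆ range (Subtype.val : {v // v ≠ u} → T.V) :=
  fun l hl => ⟨⟨l, fun h => hint (h ▸ hl)⟩, rfl⟩

lemma image_val_contract_leafSet : Subtype.val '' (T.contract u hne).leafSet = T.leafSet := by
  have hpre : (T.contract u hne).leafSet = Subtype.val ⁻¹' T.leafSet :=
    ext (contract_isLeaf_iff hne hpu hint)
  rw [hpre, image_preimage_eq_of_subset (leafSet_subset_range_val hint)]

lemma image_val_contract_leavesBelow (v : (T.contract u hne).V) :
    Subtype.val '' (T.contract u hne).leavesBelow v = T.leavesBelow v.val := by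
  have hpre : (T.contract u hne).leavesBelow v = Subtype.val ⁻¹' T.leavesBelow v.val :=
    ext fun l => and_congr (contract_isLeaf_iff hne hpu hint l) (contract_desc_iff hne hpu l v)
  rw [hpre, image_preimage_eq_of_subset fun l hl => leafSet_subset_range_val hint hl.1]

lemma contract_nLeaves : (T.contract u hne).nLeaves = T.nLeaves := by
  rw [RTree.nLeaves, RTree.nLeaves, ← image_val_contract_leafSet hne hpu hint]
  exact (ncard_image_of_injective _ Subtype.val_injective).symm

lemma clusterSet_eq_insert_clusterSet_contract {X : Type} (φ : T.V → X) :
    clusterSet T φ =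
      insert (φ '' T.leavesBelow u) (clusterSet (T.contract u hne) (φ ∘ Subtype.val)) := by
  rw [clusterSet_eq_range, clusterSet_eq_range, ← insert_image_compl_eq_range _ u]
  have hcluster (v : (T.contract u hne).V) :
      (φ ∘ Subtype.val) '' (T.contract u hne).leavesBelow v = φ '' T.leavesBelow v.val :=
    (image_comp φ Subtype.val _).trans
      (congrArg (image φ) (image_val_contract_leavesBelow hne hpu hint v))
  congr 1
  ext C
  constructor
  · rintro ⟨v, hv, rfl⟩
    exact ⟨⟨v, hv⟩, hcluster _⟩
  · rintro ⟨v, rfl⟩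
    exact ⟨v.val, v.prop, (hcluster v).symm⟩

lemma dRF_le_dRF_contract_add_one (T2 : RTree) {X : Type} (φ : T.V → X) (φ2 : T2.V → X) :
    dRF T T2 φ φ2 ≤ dRF (T.contract u hne) T2 (φ ∘ Subtype.val) φ2 + 1 := by
  rw [dRF_eq_ncard_symmDiff, dRF_eq_ncard_symmDiff,
    clusterSet_eq_insert_clusterSet_contract hne hpu hint]
  exact ncard_symmDiff_insert_le (clusterSet_finite _ _) (clusterSet_finite _ _) _

end Contract

end RTree

/-- If `u` is an internal child of the root of `T1`, then
`d*_RF(T1, T2) ≤ d*_RF(T1 - u, T2) + 1`. -/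
theorem dRFstar_contract_le (T1 T2 : RTree) (hn : T1.nLeaves = T2.nLeaves)
    (u : T1.V) (hchild : u ∈ T1.children T1.root) (hne : u ≠ T1.root)
    (hinternal : ¬ T1.IsLeaf u) :
    dRFstar T1 T2 ≤ dRFstar (T1.contract u hne) T2 + 1 := by
  have hpu : T1.parent u = T1.root := hchild.1
  have hCn := RTree.contract_nLeaves hne hpu hinternal
  obtain ⟨ψ, φ2, hψ, hφ2, hopt⟩ :=
    exists_dRFstar_eq_dRF (T1.contract u hne) T2 (hn.symm.trans hCn.symm)
  obtain ⟨φ, rfl⟩ :=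
    Subtype.val_injective.surjective_comp_right' (fun _ => ψ (T1.contract u hne).root) ψ
  have hφ : BijOn φ T1.leafSet univ := by
    rw [← RTree.image_val_contract_leafSet hne hpu hinternal]
    exact (bijOn_comp_iff Subtype.val_injective.injOn).1 hψ
  calc dRFstar T1 T2 ≤ dRF T1 T2 φ φ2 := dRFstar_le_dRF T1 T2 (finCongr hCn) hφ hφ2
    _ ≤ dRF (T1.contract u hne) T2 (φ ∘ Subtype.val) φ2 + 1 :=
      RTree.dRF_le_dRF_contract_add_one hne hpu hinternal T2 φ φ2
    _ = dRFstar (T1.contract u hne) T2 + 1 := congrArg (· + 1) hopt.symm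
end
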